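/- The map J(C) = σ(A,B) = [[B^{-1}, B^{-1}A],[A B^{-1}, A B^{-1}A + B]] from the Siegel upper half space to symmetric matrices is equivariant: for every symplectic S and every C = A + iB ∈ H_d, J(Φ_S(C)) = S J(C) S^T, where Φ_S is the linear fractional action. -/

import Mathlib

/-!
Complexify. With `v = [1; C]`, the momentum map is `σ(C) = v B⁻¹ vᴴ + iJ`. More generally, if
`MᵀN = NᵀM` and `MᴴN - NᴴM = 2iP` with `P > 0`, then `M` is invertible, `Φ = NM⁻¹` is symmetric
with `Im Φ = M⁻ᴴ P M⁻¹`, and `σ(Φ) = [M; N] P⁻¹ [M; N]ᴴ + iJ`. A real symplectic `S` preserves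
both forms `uᵀJw` and `uᴴJw`, so `[M; N] = S v` is such a pair with `P = B` and `Φ = Φ_S(C)`;
hence `σ(Φ_S(C)) = S (σ(C) - iJ) Sᵀ + iJ = S σ(C) Sᵀ`, using `S J Sᵀ = J`.
-/

open Matrix

/-- The standard symplectic matrix `J = [[0, I], [-I, 0]]`. -/
def Jmat (d : ℕ) : Matrix (Fin d ⊕ Fin d) (Fin d ⊕ Fin d) ℝ :=
  Matrix.fromBlocks 0 1 (-1) 0

/-- The generalized linear fractional transformation
`Φ_S(C) = (S21 + S22 C)(S11 + S12 C)⁻¹`. -/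
noncomputable def siegelAction {d : ℕ} (S : Matrix (Fin d ⊕ Fin d) (Fin d ⊕ Fin d) ℝ)
    (C : Matrix (Fin d) (Fin d) ℂ) : Matrix (Fin d) (Fin d) ℂ :=
  (S.toBlocks₂₁.map (Complex.ofReal) + S.toBlocks₂₂.map (Complex.ofReal) * C) *
    (S.toBlocks₁₁.map (Complex.ofReal) + S.toBlocks₁₂.map (Complex.ofReal) * C)⁻¹

/-- The momentum map `J(C) = σ(Re C, Im C) = [[B⁻¹, B⁻¹A],[A B⁻¹, A B⁻¹ A + B]]`,
with `A = Re C` and `B = Im C`. -/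
noncomputable def momMap {d : ℕ} (C : Matrix (Fin d) (Fin d) ℂ) :
    Matrix (Fin d ⊕ Fin d) (Fin d ⊕ Fin d) ℝ :=
  Matrix.fromBlocks (C.map Complex.im)⁻¹
    ((C.map Complex.im)⁻¹ * C.map Complex.re)
    (C.map Complex.re * (C.map Complex.im)⁻¹)
    (C.map Complex.re * (C.map Complex.im)⁻¹ * C.map Complex.re + C.map Complex.im)

open Complex
open scoped ComplexOrder

namespace Matrix

section Complexification

variable {m n o : Type*}

theorem map_ofReal_mul [Fintype n] (L : Matrix m n ℝ) (M : Matrix n o ℝ) :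
    (L * M).map ofReal = L.map ofReal * M.map ofReal :=
  Matrix.map_mul (f := ofRealHom)

theorem conjTranspose_map_ofReal (M : Matrix m n ℝ) : (M.map ofReal)ᴴ = (M.map ofReal)ᵀ := by
  ext i j; simp

theorem map_ofReal_inv [Fintype n] [DecidableEq n] (M : Matrix n n ℝ) :
    M⁻¹.map ofReal = (M.map ofReal)⁻¹ := by
  have hadj : M.adjugate.map ofReal = (M.map ofReal).adjugate := RingHom.map_adjugate ofRealHom M
  have hdet : (M.map ofReal).det = M.det := (RingHom.map_det ofRealHom M).symm
  rw [inv_def, inv_def, ← hadj, hdet, Ring.inverse_eq_inv', Ring.inverse_eq_inv']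
  ext i j
  simp

theorem map_ofReal_injective : Function.Injective (fun M : Matrix m n ℝ ↦ M.map ofReal) :=
  fun _ _ h ↦ Matrix.ext fun i j ↦ ofReal_injective (congrFun (congrFun h i) j)

theorem PosDef.map_ofReal [Fintype n] {B : Matrix n n ℝ} (hB : B.PosDef) :
    (B.map ofReal).PosDef := by
  have hHerm : (B.map ofReal).IsHermitian := by
    rw [IsHermitian, conjTranspose_map_ofReal, ← transpose_map,
      ← conjTranspose_eq_transpose_of_trivial, hB.isHermitian.eq]
  refine .of_dotProduct_mulVec_pos hHerm fun x hx ↦ ?_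
  set xr : n → ℝ := fun i ↦ (x i).re
  set xi : n → ℝ := fun i ↦ (x i).im
  have hre : (star x ⬝ᵥ B.map ofReal *ᵥ x).re = xr ⬝ᵥ B *ᵥ xr + xi ⬝ᵥ B *ᵥ xi := by
    simp only [xr, xi, dotProduct, mulVec, re_sum, mul_re, im_sum, mul_im, Pi.star_apply,
      RCLike.star_def, conj_re, conj_im, map_apply, ofReal_re, ofReal_im, zero_mul, sub_zero,
      neg_mul, sub_neg_eq_add, add_zero, Finset.sum_add_distrib]
  have hx' : xr ≠ 0 ∨ xi ≠ 0 := by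
    by_contra! h
    exact hx (funext fun i ↦ Complex.ext (congrFun h.1 i) (congrFun h.2 i))
  have hr := hB.posSemidef.dotProduct_mulVec_nonneg xr
  have hi := hB.posSemidef.dotProduct_mulVec_nonneg xi
  simp only [star_trivial] at hr hi
  refine Complex.pos_iff.mpr ⟨?_, (hHerm.im_star_dotProduct_mulVec_self x).symm⟩
  rw [hre]
  rcases hx' with h | h
  · exact add_pos_of_pos_of_nonneg (by simpa using hB.dotProduct_mulVec_pos h) hi
  · exact add_pos_of_nonneg_of_pos hr (by simpa using hB.dotProduct_mulVec_pos h)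

theorem sub_conjTranspose_of_symm [Fintype n] {Z : Matrix n n ℂ} (hZ : Zᵀ = Z) :
    Z - Zᴴ = (2 * I) • (Z.map im).map ofReal := by
  ext i j
  have hji : Z j i = Z i j := by rw [← transpose_apply Z i j, hZ]
  rw [sub_apply, conjTranspose_apply, hji, RCLike.star_def, Complex.sub_conj]
  simp
  ring

end Complexification

theorem fromCols_mul_fromBlocks_mul_fromRows {R n : Type*} [CommRing R] [Fintype n] [DecidableEq n]
    (X Y X' Y' : Matrix n n R) :
    fromCols X' Y' * (fromBlocks 0 1 (-1) 0 : Matrix (n ⊕ n) (n ⊕ n) R) * fromRows X Y =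
      X' * Y - Y' * X := by
  rw [fromCols_mul_fromBlocks, fromCols_mul_fromRows]
  noncomm_ring

end Matrix

theorem Jmat_eq_neg_J (d : ℕ) : Jmat d = -J (Fin d) ℝ := by
  simp [Jmat, J, fromBlocks_neg]

theorem Jmat_map_ofReal (d : ℕ) : (Jmat d).map ofReal = fromBlocks 0 1 (-1) 0 := by
  simp [Jmat, fromBlocks_map, Matrix.map_neg]

theorem mul_Jmat_mul_transpose {d : ℕ} {S : Matrix (Fin d ⊕ Fin d) (Fin d ⊕ Fin d) ℝ}
    (hS : Sᵀ * Jmat d * S = Jmat d) : S * Jmat d * Sᵀ = Jmat d := by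
  rw [Jmat_eq_neg_J] at hS ⊢
  simp only [mul_neg, neg_mul, neg_inj] at hS ⊢
  exact SymplecticGroup.mem_iff.mp (SymplecticGroup.mem_iff'.mpr hS)

section SymplecticForm

variable {d : ℕ} {S : Matrix (Fin d ⊕ Fin d) (Fin d ⊕ Fin d) ℝ} {X Y X' Y' : Matrix (Fin d) (Fin d) ℂ}

theorem conjTranspose_form_eq_of_symplectic (hS : Sᵀ * Jmat d * S = Jmat d)
    (h : S.map ofReal * fromRows X Y = fromRows X' Y') :
    X'ᴴ * Y' - Y'ᴴ * X' = Xᴴ * Y - Yᴴ * X := by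
  have hSc : (S.map ofReal)ᴴ * (Jmat d).map ofReal * S.map ofReal = (Jmat d).map ofReal := by
    rw [conjTranspose_map_ofReal, ← transpose_map, ← map_ofReal_mul, ← map_ofReal_mul, hS]
  calc X'ᴴ * Y' - Y'ᴴ * X' = (fromRows X' Y')ᴴ * (Jmat d).map ofReal * fromRows X' Y' := by
        rw [conjTranspose_fromRows_eq_fromCols_conjTranspose, Jmat_map_ofReal,
          fromCols_mul_fromBlocks_mul_fromRows]
    _ = (fromRows X Y)ᴴ * ((S.map ofReal)ᴴ * (Jmat d).map ofReal * S.map ofReal) *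
          fromRows X Y := by
        rw [← h, conjTranspose_mul]; simp only [Matrix.mul_assoc]
    _ = Xᴴ * Y - Yᴴ * X := by
        rw [hSc, conjTranspose_fromRows_eq_fromCols_conjTranspose, Jmat_map_ofReal,
          fromCols_mul_fromBlocks_mul_fromRows]

theorem transpose_form_eq_of_symplectic (hS : Sᵀ * Jmat d * S = Jmat d)
    (h : S.map ofReal * fromRows X Y = fromRows X' Y') :
    X'ᵀ * Y' - Y'ᵀ * X' = Xᵀ * Y - Yᵀ * X := by
  have hSc : (S.map ofReal)ᵀ * (Jmat d).map ofReal * S.map ofReal = (Jmat d).map ofReal := by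
    rw [← transpose_map, ← map_ofReal_mul, ← map_ofReal_mul, hS]
  calc X'ᵀ * Y' - Y'ᵀ * X' = (fromRows X' Y')ᵀ * (Jmat d).map ofReal * fromRows X' Y' := by
        rw [transpose_fromRows, Jmat_map_ofReal, fromCols_mul_fromBlocks_mul_fromRows]
    _ = (fromRows X Y)ᵀ * ((S.map ofReal)ᵀ * (Jmat d).map ofReal * S.map ofReal) *
          fromRows X Y := by
        rw [← h, transpose_mul]; simp only [Matrix.mul_assoc]
    _ = Xᵀ * Y - Yᵀ * X := by
        rw [hSc, transpose_fromRows, Jmat_map_ofReal, fromCols_mul_fromBlocks_mul_fromRows]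

end SymplecticForm

section LagrangianPair

variable {n : Type*} [Fintype n] [DecidableEq n]

theorem isUnit_det_of_conjTranspose_mul_sub_eq_smul {M N P : Matrix n n ℂ} {c : ℂ} (hc : c ≠ 0)
    (hP : P.PosDef) (h : Mᴴ * N - Nᴴ * M = c • P) : IsUnit M.det := by
  rw [isUnit_iff_ne_zero]
  intro hdet
  obtain ⟨v, hv, hMv⟩ := exists_mulVec_eq_zero_iff.mpr hdet
  have hform : star v ⬝ᵥ (Mᴴ * N - Nᴴ * M) *ᵥ v = 0 := by
    rw [sub_mulVec, ← mulVec_mulVec, ← mulVec_mulVec, hMv, mulVec_zero, dotProduct_sub,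
      dotProduct_mulVec, ← star_mulVec, hMv]
    simp
  rw [h, smul_mulVec, dotProduct_smul, smul_eq_mul] at hform
  exact (hP.dotProduct_mulVec_pos hv).ne' ((mul_eq_zero.mp hform).resolve_left hc)

variable {R : Type*} [CommRing R] {M N : Matrix n n R}

theorem transpose_mul_inv_eq_self (hM : IsUnit M.det) (h : Mᵀ * N = Nᵀ * M) :
    (N * M⁻¹)ᵀ = N * M⁻¹ := by
  have hMt : IsUnit Mᵀ.det := by rwa [det_transpose]
  rw [transpose_mul, transpose_nonsing_inv]
  calc Mᵀ⁻¹ * Nᵀ = Mᵀ⁻¹ * (Nᵀ * M) * M⁻¹ := by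
        rw [Matrix.mul_assoc, Matrix.mul_assoc, mul_nonsing_inv _ hM, Matrix.mul_one]
    _ = Mᵀ⁻¹ * Mᵀ * (N * M⁻¹) := by rw [← h]; simp only [Matrix.mul_assoc]
    _ = N * M⁻¹ := by rw [nonsing_inv_mul _ hMt, Matrix.one_mul]

theorem mul_inv_sub_conjTranspose [StarRing R] (hM : IsUnit M.det) :
    N * M⁻¹ - (N * M⁻¹)ᴴ = M⁻¹ᴴ * (Mᴴ * N - Nᴴ * M) * M⁻¹ := by
  have hMH : M⁻¹ᴴ * Mᴴ = 1 := by
    rw [← conjTranspose_mul, mul_nonsing_inv _ hM, conjTranspose_one]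
  rw [Matrix.mul_sub, Matrix.sub_mul, conjTranspose_mul, ← Matrix.mul_assoc, hMH, Matrix.one_mul,
    Matrix.mul_assoc, Matrix.mul_assoc Nᴴ, mul_nonsing_inv _ hM, Matrix.mul_one]

end LagrangianPair

theorem momMap_map_ofReal {d : ℕ} {Z : Matrix (Fin d) (Fin d) ℂ} (hZ : Zᵀ = Z)
    (hIm : IsUnit ((Z.map im).map ofReal).det) :
    (momMap Z).map ofReal = fromRows 1 Z * ((Z.map im).map ofReal)⁻¹ * (fromRows 1 Z)ᴴ +
      I • (Jmat d).map ofReal := by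
  set A := (Z.map re).map ofReal
  set B := (Z.map im).map ofReal
  have hZ_eq : Z = A + I • B := by
    ext i j
    simpa [A, B, mul_comm] using (re_add_im (Z i j)).symm
  have hZH : Zᴴ = A - I • B := by
    calc Zᴴ = Z - (2 * I) • B := by rw [← sub_conjTranspose_of_symm hZ, sub_sub_cancel]
      _ = A - I • B := by rw [hZ_eq]; module
  have hBB : B⁻¹ * B = 1 := nonsing_inv_mul _ hIm
  have hBB' : B * B⁻¹ = 1 := mul_nonsing_inv _ hIm
  simp only [momMap, fromBlocks_map, Matrix.map_add _ ofReal_add, map_ofReal_mul, map_ofReal_inv]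
  rw [fromRows_mul, conjTranspose_fromRows_eq_fromCols_conjTranspose, fromRows_mul_fromCols,
    Jmat_map_ofReal, fromBlocks_smul, fromBlocks_add, conjTranspose_one, hZH]
  change fromBlocks B⁻¹ (B⁻¹ * A) (A * B⁻¹) (A * B⁻¹ * A + B) = _
  rw [hZ_eq]
  congr 1 <;> simp only [Matrix.add_mul, Matrix.mul_sub, Matrix.smul_mul, Matrix.mul_smul,
    Matrix.mul_assoc, hBB, hBB', Matrix.one_mul, Matrix.mul_one, smul_zero, add_zero, smul_neg]
  · abel
  · abel
  · rw [smul_add, smul_smul, I_mul_I, neg_one_smul]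
    abel

theorem momMap_mul_inv {d : ℕ} {M N P : Matrix (Fin d) (Fin d) ℂ} (hP : P.PosDef)
    (hsymm : Mᵀ * N = Nᵀ * M) (hskew : Mᴴ * N - Nᴴ * M = (2 * I) • P) :
    (momMap (N * M⁻¹)).map ofReal =
      fromRows M N * P⁻¹ * (fromRows M N)ᴴ + I • (Jmat d).map ofReal := by
  have hM : IsUnit M.det := isUnit_det_of_conjTranspose_mul_sub_eq_smul (by simp) hP hskew
  have hΦ : (N * M⁻¹)ᵀ = N * M⁻¹ := transpose_mul_inv_eq_self hM hsymm
  have hIm : ((N * M⁻¹).map im).map ofReal = M⁻¹ᴴ * P * M⁻¹ := by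
    have h := mul_inv_sub_conjTranspose (N := N) hM
    rw [sub_conjTranspose_of_symm hΦ, hskew, Matrix.mul_smul, Matrix.smul_mul] at h
    exact smul_right_injective _ (by simp) h
  have hImUnit : IsUnit (((N * M⁻¹).map im).map ofReal).det := by
    rw [hIm]
    simp [det_conjTranspose, hM.ne_zero, (P.isUnit_iff_isUnit_det.mp hP.isUnit).ne_zero]
  have hrows : fromRows 1 (N * M⁻¹) * M = fromRows M N := by
    rw [fromRows_mul, Matrix.one_mul, Matrix.mul_assoc, nonsing_inv_mul _ hM, Matrix.mul_one]
  rw [momMap_map_ofReal hΦ hImUnit, hIm, Matrix.mul_inv_rev, Matrix.mul_inv_rev,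
    nonsing_inv_nonsing_inv _ hM, conjTranspose_nonsing_inv,
    nonsing_inv_nonsing_inv _ (by rw [det_conjTranspose]; exact hM.star), ← hrows,
    conjTranspose_mul]
  simp only [Matrix.mul_assoc]

theorem map_ofReal_mul_fromRows_one {d : ℕ} (S : Matrix (Fin d ⊕ Fin d) (Fin d ⊕ Fin d) ℝ)
    (C : Matrix (Fin d) (Fin d) ℂ) :
    -- without the ascription, `*` elaborates to `CStarMatrix`'s instance and `rw` fails
    S.map ofReal * (fromRows 1 C : Matrix (Fin d ⊕ Fin d) (Fin d) ℂ) =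
      fromRows (S.toBlocks₁₁.map ofReal + S.toBlocks₁₂.map ofReal * C)
        (S.toBlocks₂₁.map ofReal + S.toBlocks₂₂.map ofReal * C) := by
  conv_lhs => rw [← fromBlocks_toBlocks S, fromBlocks_map, fromBlocks_mul_fromRows]
  simp only [Matrix.mul_one]

theorem map_ofReal_mul_add_I_smul_Jmat_mul_transpose {d : ℕ}
    {S : Matrix (Fin d ⊕ Fin d) (Fin d ⊕ Fin d) ℝ} (hS : Sᵀ * Jmat d * S = Jmat d)
    (W : Matrix (Fin d ⊕ Fin d) (Fin d ⊕ Fin d) ℂ) :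
    S.map ofReal * (W + I • (Jmat d).map ofReal) * (S.map ofReal)ᵀ =
      S.map ofReal * W * (S.map ofReal)ᴴ + I • (Jmat d).map ofReal := by
  rw [conjTranspose_map_ofReal, Matrix.mul_add, Matrix.add_mul, Matrix.mul_smul, Matrix.smul_mul,
    ← transpose_map, ← map_ofReal_mul, ← map_ofReal_mul, mul_Jmat_mul_transpose hS]

/-- the momentum map `C ↦ σ(A,B)` is equivariant: for every symplectic
`S` and every `C = A + iB` in the Siegel upper half space,
`J(Φ_S(C)) = S J(C) Sᵀ`. -/
theorem momentum_map_equivariant (d : ℕ)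
    (S : Matrix (Fin d ⊕ Fin d) (Fin d ⊕ Fin d) ℝ)
    (hS : Sᵀ * Jmat d * S = Jmat d)
    (A B : Matrix (Fin d) (Fin d) ℝ) (hA : A.IsSymm) (hB : B.PosDef) :
    momMap (siegelAction S
        (A.map (Complex.ofReal) + Complex.I • B.map (Complex.ofReal))) =
      S * momMap (A.map (Complex.ofReal) + Complex.I • B.map (Complex.ofReal)) * Sᵀ := by
  set C := A.map ofReal + I • B.map ofReal with hC
  have hCsymm : Cᵀ = C := by
    rw [hC, transpose_add, transpose_smul, ← transpose_map, ← transpose_map, hA.eq,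
      ← conjTranspose_eq_transpose_of_trivial, hB.isHermitian.eq]
  have hCskew : C - Cᴴ = (2 * I) • B.map ofReal := by
    rw [sub_conjTranspose_of_symm hCsymm]
    congr 2
    ext i j
    simp [C]
  have hrows := map_ofReal_mul_fromRows_one S C
  have hbase := momMap_mul_inv hB.map_ofReal (M := 1) (N := C) (by simp [hCsymm])
    (by simpa using hCskew)
  have hmoved := momMap_mul_inv hB.map_ofReal
    (by rw [← sub_eq_zero, transpose_form_eq_of_symplectic hS hrows]; simp [hCsymm])
    (by rw [conjTranspose_form_eq_of_symplectic hS hrows]; simpa using hCskew)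
  rw [inv_one, Matrix.mul_one] at hbase
  apply map_ofReal_injective
  dsimp only
  rw [siegelAction, hmoved, map_ofReal_mul, map_ofReal_mul, hbase, transpose_map,
    map_ofReal_mul_add_I_smul_Jmat_mul_transpose hS, ← hrows, conjTranspose_mul]
  simp only [Matrix.mul_assoc]
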